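/- Suppose the set of saddle points X* x P* is nonempty, the infinite sequences generated by the inexact augmented Lagrangian method are well-defined, and the error bound assumption holds with constants kappa > 0 and epsilon > 0. Then dist(x^k, X*) -> 0 as k -> infinity. -/

import Mathlib

open scoped RealInnerProductSpace
open Filter

noncomputable section

/-- `Evec m` is `ℝ^m` with the Euclidean norm. -/
abbrev Evec (m : ℕ) := EuclideanSpace ℝ (Fin m)

/-- View a plain function `Fin m → ℝ` as a Euclidean vector. -/
def toE {m : ℕ} (v : Fin m → ℝ) : Evec m := WithLp.toLp 2 v

/-- The dual space `ℝ^{m1} × ℝ^{m2}` with the Euclidean (ℓ²) product norm. -/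
abbrev DualPair (m1 m2 : ℕ) := WithLp 2 (Evec m1 × Evec m2)

def mkDual {m1 m2 : ℕ} (lam : Evec m1) (mu : Evec m2) : DualPair m1 m2 := WithLp.toLp 2 (lam, mu)

/-- The primal-dual space `X × ℝ^{m1+m2}` with the Euclidean (ℓ²) product norm. -/
abbrev Triple (X : Type*) [NormedAddCommGroup X] (m1 m2 : ℕ) :=
  WithLp 2 (X × DualPair m1 m2)

def asT {X : Type*} [NormedAddCommGroup X] {m1 m2 : ℕ}
    (q : X × DualPair m1 m2) : Triple X m1 m2 := WithLp.toLp 2 q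

variable {X : Type*} [NormedAddCommGroup X] [InnerProductSpace ℝ X] [FiniteDimensional ℝ X]
variable {m1 m2 : ℕ}

/-- The Lagrangian `L(x, λ, μ) = f(x) + ⟨λ, h(x)⟩ + ⟨μ, g(x)⟩`. -/
def Lag (f : X → ℝ) (h : X → Evec m1) (g : X → Evec m2)
    (x : X) (lam : Evec m1) (mu : Evec m2) : ℝ :=
  f x + ⟪lam, h x⟫ + ⟪mu, g x⟫

/-- `(y, u, v) ∈ ∂L(x, λ, μ)`: the saddle subdifferential of the Lagrangian (for `μ ≥ 0`). -/
def saddleSubdiff (f : X → ℝ) (h : X → Evec m1) (g : X → Evec m2)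
    (x : X) (lam : Evec m1) (mu : Evec m2) (y : X) (u : Evec m1) (v : Evec m2) : Prop :=
  (∀ x' : X, Lag f h g x lam mu + ⟪y, x' - x⟫ ≤ Lag f h g x' lam mu) ∧
  (∀ (lam' : Evec m1) (mu' : Evec m2), (∀ i, 0 ≤ mu' i) →
    Lag f h g x lam' mu' ≤ Lag f h g x lam mu - ⟪u, lam' - lam⟫ - ⟪v, mu' - mu⟫)

/-- The set of saddle points of the Lagrangian: points `(x, (λ, μ))` with `μ ≥ 0`
and `(0,0,0) ∈ ∂L(x, λ, μ)`. -/
def SaddlePoints (f : X → ℝ) (h : X → Evec m1) (g : X → Evec m2) :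
    Set (X × DualPair m1 m2) :=
  {s | ∃ (x : X) (lam : Evec m1) (mu : Evec m2), s = (x, mkDual lam mu) ∧
    (∀ i, 0 ≤ mu i) ∧ saddleSubdiff f h g x lam mu 0 0 0}

/-- `X*`: the solution set of the primal problem (P). -/
def PrimalOpt (f : X → ℝ) (h : X → Evec m1) (g : X → Evec m2) : Set X :=
  {x | h x = 0 ∧ (∀ i, g x i ≤ 0) ∧
    ∀ x' : X, h x' = 0 → (∀ i, g x' i ≤ 0) → f x ≤ f x'}

/-- The dual objective function `d(λ, μ) = inf_x L(x, λ, μ)`, valued in `EReal`. -/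
def dualFun (f : X → ℝ) (h : X → Evec m1) (g : X → Evec m2)
    (lam : Evec m1) (mu : Evec m2) : EReal :=
  ⨅ x : X, ((Lag f h g x lam mu : ℝ) : EReal)

/-- `P*`: the solution set of the dual problem (D). -/
def DualOpt (f : X → ℝ) (h : X → Evec m1) (g : X → Evec m2) : Set (DualPair m1 m2) :=
  {p | ∃ (lam : Evec m1) (mu : Evec m2), p = mkDual lam mu ∧ (∀ i, 0 ≤ mu i) ∧
    ∀ (lam' : Evec m1) (mu' : Evec m2), (∀ i, 0 ≤ mu' i) →
      dualFun f h g lam' mu' ≤ dualFun f h g lam mu}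

/-- The augmented Lagrangian with penalty parameter `c`. -/
def AugLag (f : X → ℝ) (h : X → Evec m1) (g : X → Evec m2) (c : ℝ)
    (x : X) (lam : Evec m1) (mu : Evec m2) : ℝ :=
  f x + ⟪lam, h x⟫ + (c / 2) * ‖h x‖ ^ 2 +
    (1 / (2 * c)) * (‖toE (fun i => max 0 (mu i + c * g x i))‖ ^ 2 - ‖mu‖ ^ 2)

/-- The inexact augmented Lagrangian method of Eckstein and Silva, with relative error
tolerance `σ ∈ [0,1)` and penalty parameters `c k` with `inf_k c k > 0`. -/
structure ALMSeq (f : X → ℝ) (h : X → Evec m1) (g : X → Evec m2)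
    (σ : ℝ) (c : ℕ → ℝ) (x y w : ℕ → X)
    (lam : ℕ → Evec m1) (mu : ℕ → Evec m2) : Prop where
  sigma_nonneg : 0 ≤ σ
  sigma_lt_one : σ < 1
  c_pos : ∀ k, 0 < c k
  c_inf : ∃ cmin > 0, ∀ k, cmin ≤ c k
  mu0_nonneg : ∀ i, 0 ≤ mu 0 i
  /-- `y k` is a subgradient at `x k` of `x ↦ L_{c_k}(x, λ^{k-1}, μ^{k-1})`. -/
  subgrad : ∀ k, 1 ≤ k → ∀ x' : X,
    AugLag f h g (c k) (x k) (lam (k - 1)) (mu (k - 1)) + ⟪y k, x' - x k⟫ ≤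
      AugLag f h g (c k) x' (lam (k - 1)) (mu (k - 1))
  /-- The relative error criterion. -/
  err : ∀ k, 1 ≤ k →
    (2 / c k) * |⟪w (k - 1) - x k, y k⟫| + ‖y k‖ ^ 2 ≤
      σ * (‖h (x k)‖ ^ 2 +
        ‖toE (fun i => min (mu (k - 1) i / c k) (-(g (x k) i)))‖ ^ 2)
  lam_update : ∀ k, 1 ≤ k → lam k = lam (k - 1) + c k • h (x k)
  mu_update : ∀ k, 1 ≤ k → mu k = toE (fun i => max 0 (mu (k - 1) i + c k * g (x k) i))
  w_update : ∀ k, 1 ≤ k → w k = w (k - 1) - c k • y k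

open Set Topology

/-!
The method is an inexact proximal point method for the saddle subdifferential `∂L`. The
augmented Lagrangian at `(λ^{k-1}, μ^{k-1})` and the ordinary Lagrangian at the updated multipliers
`(λ^k, μ^k)` differ from `f` by terms with the same directional derivatives at `x^k`, the second of
them convex; hence the subgradient `y^k` of the former is one of the latter, and with the multiplier
update `r^k = (y^k, -h(x^k), (μ^{k-1} - μ^k)/c_k) ∈ ∂L(x^k, λ^k, μ^k)`. Monotonicity of `∂L`
against a saddle point and the relative error criterion make `(w^k, λ^k, μ^k)` Fejér monotone, with
decrease at least `(1 - σ) c_k² (‖h(x^k)‖² + ‖(μ^{k-1} - μ^k)/c_k‖²)`; as `c_k` is bounded away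
from zero, `r^k → 0`. Once `‖r^k‖ ≤ ε`, the error bound gives
`dist(x^k, X*) ≤ dist((x^k, λ^k, μ^k), X* × P*) ≤ κ ‖r^k‖`.
-/

section LineDeriv

variable {E : Type*} [NormedAddCommGroup E] [InnerProductSpace ℝ E]

theorem ConvexOn.inner_sub_lineDeriv_le_of_subgradient_add {F φ : E → ℝ}
    (hF : ConvexOn ℝ univ F) {x y d : E} {D : ℝ} (hφ : HasLineDerivAt ℝ φ D x d)
    (hy : ∀ z, F x + φ x + ⟪y, z - x⟫ ≤ F z + φ z) :
    F x + ⟪y, d⟫ - D ≤ F (x + d) := by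
  suffices ⟪y, d⟫ - (F (x + d) - F x) ≤ D by linarith
  refine ge_of_tendsto hφ.tendsto_slope_zero_right ?_
  filter_upwards [Ioc_mem_nhdsGT zero_lt_one] with t ⟨ht0, ht1⟩
  have hconv : F (x + t • d) ≤ (1 - t) * F x + t * F (x + d) := by
    have := hF.2 (mem_univ x) (mem_univ (x + d)) (sub_nonneg.2 ht1) ht0.le (by ring)
    rwa [smul_add, ← add_assoc, ← add_smul, sub_add_cancel, one_smul] at this
  have hsub := hy (x + t • d)
  rw [add_sub_cancel_left, real_inner_smul_right] at hsub
  rw [smul_eq_mul, le_inv_mul_iff₀ ht0]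
  linarith

theorem ConvexOn.add_lineDeriv_le {ψ : E → ℝ} (hψ : ConvexOn ℝ univ ψ) {x d : E} {D : ℝ}
    (hD : HasLineDerivAt ℝ ψ D x d) : ψ x + D ≤ ψ (x + d) := by
  have hφ : HasLineDerivAt ℝ (fun z => -ψ z) (-D) x d := hD.neg
  simpa using hψ.inner_sub_lineDeriv_le_of_subgradient_add (y := 0) hφ (fun z => by simp)

theorem ConvexOn.subgradient_add_of_lineDeriv_eq {F φ ψ : E → ℝ} (hF : ConvexOn ℝ univ F)
    (hψ : ConvexOn ℝ univ ψ) {x y : E} (D : E → ℝ) (hφD : ∀ d, HasLineDerivAt ℝ φ (D d) x d)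
    (hψD : ∀ d, HasLineDerivAt ℝ ψ (D d) x d) (hy : ∀ z, F x + φ x + ⟪y, z - x⟫ ≤ F z + φ z)
    (z : E) : F x + ψ x + ⟪y, z - x⟫ ≤ F z + ψ z := by
  have h₁ := hF.inner_sub_lineDeriv_le_of_subgradient_add (hφD (z - x)) hy
  have h₂ := hψ.add_lineDeriv_le (hψD (z - x))
  rw [add_sub_cancel] at h₁ h₂
  linarith

theorem AffineMap.hasLineDerivAt {F : Type*} [NormedAddCommGroup F] [NormedSpace ℝ F]
    (A : E →ᵃ[ℝ] F) (x d : E) :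
    HasLineDerivAt ℝ A (A.linear d) x d := by
  have hline : (fun t : ℝ => A (x + t • d)) = fun t => A x + t • A.linear d := by
    funext t
    rw [add_comm x, ← vadd_eq_add, A.map_vadd, vadd_eq_add, map_smul, add_comm]
  unfold HasLineDerivAt
  rw [hline]
  simpa using ((hasDerivAt_id (0 : ℝ)).smul_const (A.linear d)).const_add (A x)

end LineDeriv

theorem hasDerivAt_max_zero_sq (s : ℝ) : HasDerivAt (fun t => max 0 t ^ 2) (2 * max 0 s) s := by
  refine hasDerivAt_of_hasDerivAt_of_ne' (f := fun t => max 0 t ^ 2)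
    (g := fun t => 2 * max 0 t) (x := 0) (fun r hr => ?_) (by fun_prop) (by fun_prop) s
  rcases hr.lt_or_gt with hr | hr
  · rw [max_eq_left hr.le, mul_zero]
    refine (hasDerivAt_const r (0 : ℝ)).congr_of_eventuallyEq ?_
    filter_upwards [Iio_mem_nhds hr] with t (ht : t < 0)
    simp [max_eq_left ht.le]
  · rw [max_eq_right hr.le]
    refine ((hasDerivAt_pow 2 r).congr_of_eventuallyEq ?_).congr_deriv (by ring)
    filter_upwards [Ioi_mem_nhds hr] with t (ht : 0 < t)
    simp [max_eq_right ht.le]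

theorem sub_max_zero_mul_sub_max_zero_nonpos {m : ℝ} (hm : 0 ≤ m) (s : ℝ) :
    (m - max 0 s) * (s - max 0 s) ≤ 0 := by
  rcases le_total 0 s with hs | hs
  · simp [max_eq_right hs]
  · simpa [max_eq_left hs] using mul_nonpos_of_nonneg_of_nonpos hm hs

theorem min_div_neg_eq {a b c : ℝ} (hc : 0 < c) :
    min (a / c) (-b) = (a - max 0 (a + c * b)) / c := by
  rcases le_total 0 (a + c * b) with hs | hs
  · rw [max_eq_right hs, min_eq_right, eq_div_iff hc.ne']
    · ring
    · rw [le_div_iff₀ hc]; linarith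
  · rw [max_eq_left hs, sub_zero, min_eq_left]
    rw [div_le_iff₀ hc]; linarith

theorem tendsto_zero_of_add_le_of_nonneg {a b : ℕ → ℝ} (ha : ∀ k, 0 ≤ a k) (hb : ∀ k, 0 ≤ b k)
    (hab : ∀ k, a (k + 1) + b k ≤ a k) : Tendsto b atTop (𝓝 0) := by
  have hanti : Antitone a := antitone_nat_of_succ_le fun k => by linarith [hab k, hb k]
  have hlim := tendsto_atTop_ciInf hanti ⟨0, by rintro _ ⟨k, rfl⟩; exact ha k⟩
  have hdiff : Tendsto (fun k => a k - a (k + 1)) atTop (𝓝 0) := by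
    simpa using hlim.sub (hlim.comp (tendsto_add_atTop_nat 1))
  exact squeeze_zero hb (fun k => by linarith [hab k]) hdiff

theorem ConvexOn.finsetSum {𝕜 E ι : Type*} [Field 𝕜] [LinearOrder 𝕜] [IsStrictOrderedRing 𝕜]
    [AddCommGroup E] [Module 𝕜 E] {s : Set E} (hs : Convex 𝕜 s) (t : Finset ι) {F : ι → E → 𝕜}
    (hF : ∀ i ∈ t, ConvexOn 𝕜 s (F i)) : ConvexOn 𝕜 s (fun x => ∑ i ∈ t, F i x) := by
  classical
  induction t using Finset.induction_on with
  | empty => simpa using convexOn_const (0 : 𝕜) hs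
  | insert i t hi ih =>
    simp_rw [Finset.sum_insert hi]
    exact (hF i (t.mem_insert_self i)).add (ih fun j hj => hF j (Finset.mem_insert_of_mem hj))

section Fejer

variable {E : Type*} [NormedAddCommGroup E] [InnerProductSpace ℝ E]

theorem norm_add_smul_sq (a b : E) (t : ℝ) :
    ‖a + t • b‖ ^ 2 = ‖a‖ ^ 2 + 2 * t * ⟪b, a⟫ + t ^ 2 * ‖b‖ ^ 2 := by
  rw [norm_add_sq_real, real_inner_smul_right, norm_smul, mul_pow, Real.norm_eq_abs, sq_abs,
    real_inner_comm]
  ring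

variable {F G : Type*} [NormedAddCommGroup F] [InnerProductSpace ℝ F]
  [NormedAddCommGroup G] [InnerProductSpace ℝ G]

theorem fejer_step {c σ : ℝ} (hc : 0 < c) {w₀ w₁ x y xs : E} {p₀ p₁ u ps : F} {q₀ q₁ v qs : G}
    (hw : w₁ = w₀ - c • y) (hp : p₀ = p₁ + c • u) (hq : q₀ = q₁ + c • v)
    (hmono : 0 ≤ ⟪y, x - xs⟫ + ⟪u, p₁ - ps⟫ + ⟪v, q₁ - qs⟫)
    (herr : 2 / c * |⟪w₀ - x, y⟫| + ‖y‖ ^ 2 ≤ σ * (‖u‖ ^ 2 + ‖v‖ ^ 2)) :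
    ‖w₁ - xs‖ ^ 2 + ‖p₁ - ps‖ ^ 2 + ‖q₁ - qs‖ ^ 2 + (1 - σ) * c ^ 2 * (‖u‖ ^ 2 + ‖v‖ ^ 2) ≤
      ‖w₀ - xs‖ ^ 2 + ‖p₀ - ps‖ ^ 2 + ‖q₀ - qs‖ ^ 2 := by
  have ew : ‖w₁ - xs‖ ^ 2 =
      ‖w₀ - xs‖ ^ 2 - 2 * c * (⟪y, w₀ - x⟫ + ⟪y, x - xs⟫) + c ^ 2 * ‖y‖ ^ 2 := by
    rw [hw, sub_right_comm, sub_eq_add_neg, ← neg_smul, norm_add_smul_sq, ← inner_add_right,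
      sub_add_sub_cancel]
    ring
  have ep : ‖p₀ - ps‖ ^ 2 = ‖p₁ - ps‖ ^ 2 + 2 * c * ⟪u, p₁ - ps⟫ + c ^ 2 * ‖u‖ ^ 2 := by
    rw [hp, add_sub_right_comm, norm_add_smul_sq]
  have eq : ‖q₀ - qs‖ ^ 2 = ‖q₁ - qs‖ ^ 2 + 2 * c * ⟪v, q₁ - qs⟫ + c ^ 2 * ‖v‖ ^ 2 := by
    rw [hq, add_sub_right_comm, norm_add_smul_sq]
  have herr' : 2 * c * |⟪w₀ - x, y⟫| + c ^ 2 * ‖y‖ ^ 2 ≤ σ * c ^ 2 * (‖u‖ ^ 2 + ‖v‖ ^ 2) :=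
    calc 2 * c * |⟪w₀ - x, y⟫| + c ^ 2 * ‖y‖ ^ 2 = c ^ 2 * (2 / c * |⟪w₀ - x, y⟫| + ‖y‖ ^ 2) := by
          field_simp
      _ ≤ c ^ 2 * (σ * (‖u‖ ^ 2 + ‖v‖ ^ 2)) := mul_le_mul_of_nonneg_left herr (sq_nonneg c)
      _ = σ * c ^ 2 * (‖u‖ ^ 2 + ‖v‖ ^ 2) := by ring
  have habs : -(2 * c * ⟪y, w₀ - x⟫) ≤ 2 * c * |⟪w₀ - x, y⟫| := by
    rw [← mul_neg, real_inner_comm]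
    exact mul_le_mul_of_nonneg_left (neg_le_abs _) (by positivity)
  linarith [mul_nonneg hc.le hmono]

end Fejer

@[simp] theorem toE_apply {m : ℕ} (v : Fin m → ℝ) (i : Fin m) : toE v i = v i := rfl

theorem Evec.inner_eq_sum {m : ℕ} (u v : Evec m) : ⟪u, v⟫ = ∑ i, u i * v i := by
  simp [PiLp.inner_apply, mul_comm]

theorem Evec.inner_nonpos {m : ℕ} {u v : Evec m} (hu : ∀ i, 0 ≤ u i) (hv : ∀ i, v i ≤ 0) :
    ⟪u, v⟫ ≤ 0 := by
  rw [Evec.inner_eq_sum]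
  exact Finset.sum_nonpos fun i _ => mul_nonpos_of_nonneg_of_nonpos (hu i) (hv i)

theorem norm_asT_mkDual_sq {E : Type*} [NormedAddCommGroup E] (a : E) (u : Evec m1)
    (v : Evec m2) :
    ‖asT (a, mkDual u v)‖ ^ 2 = ‖a‖ ^ 2 + (‖u‖ ^ 2 + ‖v‖ ^ 2) := by
  rw [asT, WithLp.prod_norm_sq_eq_of_L2, mkDual, WithLp.prod_norm_sq_eq_of_L2]
  rfl

section Lagrangian

variable {E : Type*} {f : E → ℝ} {h : E → Evec m1} {g : E → Evec m2}

theorem Lag_eq (z : E) (lam : Evec m1) (mu : Evec m2) :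
    Lag f h g z lam mu = f z + (⟪lam, h z⟫ + ∑ j, mu j * g z j) := by
  rw [Lag, Evec.inner_eq_sum mu]
  ring

theorem AugLag_eq (c : ℝ) (z : E) (lam : Evec m1) (mu : Evec m2) :
    AugLag f h g c z lam mu = f z + (⟪lam, h z⟫ + c / 2 * ‖h z‖ ^ 2 +
      (∑ j, max 0 (mu j + c * g z j) ^ 2 - ‖mu‖ ^ 2) / (2 * c)) := by
  rw [AugLag, EuclideanSpace.real_norm_sq_eq (toE _)]
  simp only [toE_apply]
  ring

theorem Lag_le_of_multiplier_update {c : ℝ} (hc : 0 < c) (x : E) (lam₁ lam' : Evec m1)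
    (mu mu' : Evec m2) (hmu' : ∀ j, 0 ≤ mu' j) :
    Lag f h g x lam' mu' ≤ Lag f h g x lam₁ (toE fun j => max 0 (mu j + c * g x j)) -
      ⟪-h x, lam' - lam₁⟫ - ⟪c⁻¹ • (mu - toE fun j => max 0 (mu j + c * g x j)),
        mu' - toE fun j => max 0 (mu j + c * g x j)⟫ := by
  set mu₁ : Evec m2 := toE fun j => max 0 (mu j + c * g x j)
  have hnormal : ⟪g x + c⁻¹ • (mu - mu₁), mu' - mu₁⟫ ≤ 0 := by
    rw [Evec.inner_eq_sum]
    refine Finset.sum_nonpos fun j _ => ?_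
    have hproj := sub_max_zero_mul_sub_max_zero_nonpos (hmu' j) (mu j + c * g x j)
    have hcoord : (g x + c⁻¹ • (mu - mu₁)) j = c⁻¹ * (mu j + c * g x j - mu₁ j) := by
      simp only [PiLp.add_apply, PiLp.smul_apply, PiLp.sub_apply, smul_eq_mul]
      field_simp
      ring
    rw [hcoord, PiLp.sub_apply, mul_assoc, mul_comm]
    exact mul_nonpos_of_nonpos_of_nonneg (by simpa [mu₁, mul_comm] using hproj)
      (inv_nonneg.2 hc.le)
  simp only [Lag, inner_neg_left, inner_sub_right, inner_add_left] at hnormal ⊢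
  rw [real_inner_comm (h x) lam', real_inner_comm (h x) lam₁, real_inner_comm (g x) mu',
    real_inner_comm (g x) mu₁] at *
  linarith

variable [NormedAddCommGroup E] [InnerProductSpace ℝ E]

theorem mem_primalOpt_of_saddleSubdiff {xs : E} {lams : Evec m1} {mus : Evec m2}
    (hmus : ∀ i, 0 ≤ mus i) (hs : saddleSubdiff f h g xs lams mus 0 0 0) :
    xs ∈ PrimalOpt f h g := by
  have hdual : ∀ lam mu, (∀ i, 0 ≤ mu i) → ⟪lam - lams, h xs⟫ + ⟪mu - mus, g xs⟫ ≤ 0 := by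
    intro lam mu hmu
    have := hs.2 lam mu hmu
    simp only [Lag, inner_zero_left, sub_zero, inner_sub_left] at this ⊢
    linarith
  have hfeas_h : h xs = 0 := by simpa using hdual (lams + h xs) mus hmus
  have hfeas_g : ∀ i, g xs i ≤ 0 := by
    intro i
    have hmu : ∀ j, 0 ≤ (mus + EuclideanSpace.single i 1 : Evec m2) j := fun j =>
      add_nonneg (hmus j) (by by_cases hji : j = i <;> simp [hji])
    simpa [EuclideanSpace.inner_single_left] using hdual lams _ hmu
  have hcompl : ⟪mus, g xs⟫ = 0 :=
    le_antisymm (Evec.inner_nonpos hmus hfeas_g) (by simpa using hdual lams 0 fun _ => le_rfl)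
  refine ⟨hfeas_h, hfeas_g, fun z hz hgz => ?_⟩
  have hmin := hs.1 z
  simp only [Lag, inner_zero_left, add_zero, hfeas_h, hz, inner_zero_right, hcompl] at hmin
  linarith [Evec.inner_nonpos hmus hgz]

theorem saddleSubdiff_inner_nonneg {x xs : E} {lam lams : Evec m1} {mu mus : Evec m2} {y : E}
    {u : Evec m1} {v : Evec m2} (hmu : ∀ i, 0 ≤ mu i) (hmus : ∀ i, 0 ≤ mus i)
    (hxy : saddleSubdiff f h g x lam mu y u v) (hs : saddleSubdiff f h g xs lams mus 0 0 0) :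
    0 ≤ ⟪y, x - xs⟫ + ⟪u, lam - lams⟫ + ⟪v, mu - mus⟫ := by
  have h₁ := hxy.1 xs
  have h₂ := hxy.2 lams mus hmus
  have h₃ := hs.1 x
  have h₄ := hs.2 lam mu hmu
  simp only [inner_zero_left, sub_zero, add_zero] at h₃ h₄
  rw [← neg_sub x, inner_neg_right] at h₁
  rw [← neg_sub lam, ← neg_sub mu, inner_neg_right, inner_neg_right] at h₂
  linarith

theorem infDist_primalOpt_le (hsad : (SaddlePoints f h g).Nonempty) (z : E)
    (p : DualPair m1 m2) :
    Metric.infDist z (PrimalOpt f h g) ≤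
      Metric.infDist (asT (z, p)) (asT '' SaddlePoints f h g) := by
  refine (Metric.le_infDist (hsad.image _)).2 ?_
  rintro _ ⟨_, ⟨xs, lams, mus, rfl, hmus, hs⟩, rfl⟩
  exact (Metric.infDist_le_dist_of_mem (mem_primalOpt_of_saddleSubdiff hmus hs)).trans
    (WithLp.dist_fst_le (asT (z, p)) (asT (xs, mkDual lams mus)))

theorem Lag_subgradient_of_AugLag_subgradient (hf : ConvexOn ℝ univ f) {A : E →ᵃ[ℝ] Evec m1}
    (hA : h = A) (hg₁ : ∀ j, ConvexOn ℝ univ (fun z => g z j))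
    (hg₂ : ∀ j, Differentiable ℝ (fun z => g z j)) {c : ℝ} (hc : 0 < c) {x y : E}
    {lam : Evec m1} {mu : Evec m2}
    (hy : ∀ z, AugLag f h g c x lam mu + ⟪y, z - x⟫ ≤ AugLag f h g c z lam mu) (z : E) :
    Lag f h g x (lam + c • h x) (toE fun j => max 0 (mu j + c * g x j)) + ⟪y, z - x⟫ ≤
      Lag f h g z (lam + c • h x) (toE fun j => max 0 (mu j + c * g x j)) := by
  subst hA
  set lam' := lam + c • A x
  set mu' : Evec m2 := toE fun j => max 0 (mu j + c * g x j)
  set g' : Fin m2 → E → ℝ := fun j => fderiv ℝ (fun z => g z j) x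
  have hgD : ∀ j d, HasLineDerivAt ℝ (fun z => g z j) (g' j d) x d :=
    fun j d => ((hg₂ j) x).hasFDerivAt.hasLineDerivAt d
  set D : E → ℝ := fun d => ⟪lam', A.linear d⟫ + ∑ j, mu' j * g' j d
  have hφD : ∀ d, HasLineDerivAt ℝ (fun z => ⟪lam, A z⟫ + c / 2 * ‖A z‖ ^ 2 +
      (∑ j, max 0 (mu j + c * g z j) ^ 2 - ‖mu‖ ^ 2) / (2 * c)) (D d) x d := by
    intro d
    have hsq : ∀ j, HasLineDerivAt ℝ (fun z => max 0 (mu j + c * g z j) ^ 2)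
        (2 * c * (mu' j * g' j d)) x d := fun j =>
      ((hasDerivAt_max_zero_sq (mu j + c * g x j)).comp_of_eq (0 : ℝ)
        (((hgD j d).const_mul c).const_add (mu j)) (by simp)).congr_deriv
        (by simp only [mu', toE_apply]; ring)
    have hsum := (HasDerivAt.fun_sum (u := Finset.univ) fun j _ => hsq j).congr_deriv
      (Finset.mul_sum _ _ _).symm
    have := (((hasDerivAt_const (0 : ℝ) lam).inner ℝ (A.hasLineDerivAt x d)).add
      ((A.hasLineDerivAt x d).norm_sq.const_mul (c / 2))).add
      ((hsum.sub_const (‖mu‖ ^ 2)).div_const (2 * c))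
    refine this.congr_deriv ?_
    simp only [D, lam', inner_add_left, real_inner_smul_left, inner_zero_left, zero_smul, add_zero]
    field_simp
  have hψD : ∀ d, HasLineDerivAt ℝ (fun z => ⟪lam', A z⟫ + ∑ j, mu' j * g z j) (D d) x d := by
    intro d
    have := ((hasDerivAt_const (0 : ℝ) lam').inner ℝ (A.hasLineDerivAt x d)).add
      (HasDerivAt.fun_sum (u := Finset.univ) fun j _ => (hgD j d).const_mul (mu' j))
    refine this.congr_deriv ?_
    simp [D]
  have hψ : ConvexOn ℝ univ (fun z => ⟪lam', A z⟫ + ∑ j, mu' j * g z j) := by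
    refine ConvexOn.add ?_ (ConvexOn.finsetSum convex_univ _ fun j _ =>
      (hg₁ j).smul (le_max_left _ _))
    exact ((innerₛₗ ℝ lam').convexOn convex_univ).comp_affineMap A
  have := hf.subgradient_add_of_lineDeriv_eq hψ D hφD hψD (by simpa [AugLag_eq] using hy) z
  simpa [Lag_eq] using this

theorem saddleSubdiff_of_AugLag_subgradient (hf : ConvexOn ℝ univ f) {A : E →ᵃ[ℝ] Evec m1}
    (hA : h = A) (hg₁ : ∀ j, ConvexOn ℝ univ (fun z => g z j))
    (hg₂ : ∀ j, Differentiable ℝ (fun z => g z j)) {c : ℝ} (hc : 0 < c) {x y : E}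
    {lam : Evec m1} {mu : Evec m2}
    (hy : ∀ z, AugLag f h g c x lam mu + ⟪y, z - x⟫ ≤ AugLag f h g c z lam mu) :
    saddleSubdiff f h g x (lam + c • h x) (toE fun j => max 0 (mu j + c * g x j)) y (-h x)
      (c⁻¹ • (mu - toE fun j => max 0 (mu j + c * g x j))) :=
  ⟨Lag_subgradient_of_AugLag_subgradient hf hA hg₁ hg₂ hc hy,
    fun lam' mu' hmu' => Lag_le_of_multiplier_update hc x _ lam' mu mu' hmu'⟩

end Lagrangian

namespace ALMSeq

variable {E : Type*} [NormedAddCommGroup E] [InnerProductSpace ℝ E]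
  {f : E → ℝ} {h : E → Evec m1} {g : E → Evec m2} {σ : ℝ} {c : ℕ → ℝ} {x y w : ℕ → E}
  {lam : ℕ → Evec m1} {mu : ℕ → Evec m2}

theorem mu_nonneg (halg : ALMSeq f h g σ c x y w lam mu) (k : ℕ) (i : Fin m2) : 0 ≤ mu k i := by
  cases k with
  | zero => exact halg.mu0_nonneg i
  | succ k =>
    rw [halg.mu_update (k + 1) (by omega)]
    exact le_max_left _ _

theorem err_succ (halg : ALMSeq f h g σ c x y w lam mu) (k : ℕ) :
    2 / c (k + 1) * |⟪w k - x (k + 1), y (k + 1)⟫| + ‖y (k + 1)‖ ^ 2 ≤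
      σ * (‖-h (x (k + 1))‖ ^ 2 + ‖(c (k + 1))⁻¹ • (mu k - mu (k + 1))‖ ^ 2) := by
  have herr := halg.err (k + 1) (by omega)
  have hv : toE (fun i => min (mu k i / c (k + 1)) (-(g (x (k + 1)) i))) =
      (c (k + 1))⁻¹ • (mu k - mu (k + 1)) := by
    ext i
    rw [toE_apply, min_div_neg_eq (halg.c_pos _), halg.mu_update (k + 1) (by omega)]
    simp [div_eq_inv_mul]
  rw [norm_neg]
  rwa [Nat.add_sub_cancel, hv] at herr

theorem saddleSubdiff_succ (halg : ALMSeq f h g σ c x y w lam mu) (hf : ConvexOn ℝ univ f)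
    {A : E →ᵃ[ℝ] Evec m1} (hA : h = A) (hg₁ : ∀ j, ConvexOn ℝ univ (fun z => g z j))
    (hg₂ : ∀ j, Differentiable ℝ (fun z => g z j)) (k : ℕ) :
    saddleSubdiff f h g (x (k + 1)) (lam (k + 1)) (mu (k + 1)) (y (k + 1)) (-h (x (k + 1)))
      ((c (k + 1))⁻¹ • (mu k - mu (k + 1))) := by
  have hy : ∀ z, AugLag f h g (c (k + 1)) (x (k + 1)) (lam k) (mu k) +
      ⟪y (k + 1), z - x (k + 1)⟫ ≤ AugLag f h g (c (k + 1)) z (lam k) (mu k) :=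
    halg.subgrad (k + 1) (by omega)
  rw [halg.lam_update (k + 1) (by omega), halg.mu_update (k + 1) (by omega)]
  exact saddleSubdiff_of_AugLag_subgradient hf hA hg₁ hg₂ (halg.c_pos _) hy

theorem fejer (halg : ALMSeq f h g σ c x y w lam mu) (hf : ConvexOn ℝ univ f)
    {A : E →ᵃ[ℝ] Evec m1} (hA : h = A) (hg₁ : ∀ j, ConvexOn ℝ univ (fun z => g z j))
    (hg₂ : ∀ j, Differentiable ℝ (fun z => g z j)) {xs : E} {lams : Evec m1} {mus : Evec m2}
    (hmus : ∀ i, 0 ≤ mus i) (hs : saddleSubdiff f h g xs lams mus 0 0 0) (k : ℕ) :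
    ‖w (k + 1) - xs‖ ^ 2 + ‖lam (k + 1) - lams‖ ^ 2 + ‖mu (k + 1) - mus‖ ^ 2 +
        (1 - σ) * c (k + 1) ^ 2 *
          (‖-h (x (k + 1))‖ ^ 2 + ‖(c (k + 1))⁻¹ • (mu k - mu (k + 1))‖ ^ 2) ≤
      ‖w k - xs‖ ^ 2 + ‖lam k - lams‖ ^ 2 + ‖mu k - mus‖ ^ 2 := by
  have hc := halg.c_pos (k + 1)
  refine fejer_step hc (halg.w_update (k + 1) (by omega)) ?_ ?_
    (saddleSubdiff_inner_nonneg (halg.mu_nonneg _) hmus (halg.saddleSubdiff_succ hf hA hg₁ hg₂ k)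
      hs) (halg.err_succ k)
  · rw [halg.lam_update (k + 1) (by omega), smul_neg, Nat.add_sub_cancel, add_neg_cancel_right]
  · rw [smul_smul, mul_inv_cancel₀ hc.ne', one_smul, add_sub_cancel]

theorem tendsto_residual (halg : ALMSeq f h g σ c x y w lam mu) (hf : ConvexOn ℝ univ f)
    {A : E →ᵃ[ℝ] Evec m1} (hA : h = A) (hg₁ : ∀ j, ConvexOn ℝ univ (fun z => g z j))
    (hg₂ : ∀ j, Differentiable ℝ (fun z => g z j)) (hsad : (SaddlePoints f h g).Nonempty) :
    Tendsto (fun k => ‖asT (y (k + 1),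
      mkDual (-h (x (k + 1))) ((c (k + 1))⁻¹ • (mu k - mu (k + 1))))‖) atTop (𝓝 0) := by
  obtain ⟨_, xs, lams, mus, -, hmus, hs⟩ := hsad
  obtain ⟨cmin, hcmin, hcle⟩ := halg.c_inf
  have hσ : 0 < 1 - σ := sub_pos.2 halg.sigma_lt_one
  set U : ℕ → ℝ := fun k => ‖-h (x (k + 1))‖ ^ 2 + ‖(c (k + 1))⁻¹ • (mu k - mu (k + 1))‖ ^ 2
  have hdecrease : Tendsto (fun k => (1 - σ) * cmin ^ 2 * U k) atTop (𝓝 0) := by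
    refine tendsto_zero_of_add_le_of_nonneg (a := fun k =>
      ‖w k - xs‖ ^ 2 + ‖lam k - lams‖ ^ 2 + ‖mu k - mus‖ ^ 2) (fun k => by positivity)
      (fun k => by positivity) fun k => le_trans ?_ (halg.fejer hf hA hg₁ hg₂ hmus hs k)
    have hc2 : cmin ^ 2 ≤ c (k + 1) ^ 2 := pow_le_pow_left₀ hcmin.le (hcle _) 2
    gcongr
  have hU : Tendsto U atTop (𝓝 0) := by
    have := hdecrease.const_mul ((1 - σ) * cmin ^ 2)⁻¹
    rw [mul_zero] at this
    refine this.congr fun k => ?_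
    field_simp
  refine squeeze_zero (fun k => norm_nonneg _) (fun k => Real.le_sqrt_of_sq_le ?_)
    (by simpa using (hU.const_mul (1 + σ)).sqrt)
  have herr := halg.err_succ k
  have hc := halg.c_pos (k + 1)
  have hstep : 0 ≤ 2 / c (k + 1) * |⟪w k - x (k + 1), y (k + 1)⟫| := by positivity
  rw [norm_asT_mkDual_sq]
  linarith

end ALMSeq

theorem eckstein_silva_alm_primal_distance_tends_to_zero_general {f : X → ℝ} {h : X → Evec m1} {g : X → Evec m2}
    (hf : ConvexOn ℝ Set.univ f)
    (hh : ∃ A : X →ᵃ[ℝ] Evec m1, ∀ z, h z = A z)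
    (hg1 : ∀ i, ConvexOn ℝ Set.univ (fun z => g z i))
    (hg2 : ∀ i, ContDiff ℝ 1 (fun z => g z i))
    {σ : ℝ} {c : ℕ → ℝ} {x y w : ℕ → X} {lam : ℕ → Evec m1} {mu : ℕ → Evec m2}
    (halg : ALMSeq f h g σ c x y w lam mu)
    (hsad : (SaddlePoints f h g).Nonempty)
    {κ ε : ℝ} (hε : 0 < ε)
    (heb : ∀ (z : X) (lam' : Evec m1) (mu' : Evec m2) (y' : X) (u' : Evec m1) (v' : Evec m2),
      (∀ i, 0 ≤ mu' i) → saddleSubdiff f h g z lam' mu' y' u' v' →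
      ‖asT (y', mkDual u' v')‖ ≤ ε →
      Metric.infDist (asT (z, mkDual lam' mu')) (asT '' SaddlePoints f h g) ≤
        κ * ‖asT (y', mkDual u' v')‖)
 :
    Tendsto (fun k => Metric.infDist (x k) (PrimalOpt f h g)) atTop (nhds 0) := by
  obtain ⟨A, hA⟩ := hh
  replace hA : h = A := funext hA
  have hg₂ : ∀ i, Differentiable ℝ (fun z => g z i) :=
    fun i => (hg2 i).differentiable one_ne_zero
  have hres := halg.tendsto_residual hf hA hg1 hg₂ hsad
  rw [← tendsto_add_atTop_iff_nat 1]
  refine squeeze_zero' (Eventually.of_forall fun k => Metric.infDist_nonneg) ?_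
    (by simpa using hres.const_mul κ)
  filter_upwards [hres.eventually (ge_mem_nhds hε)] with k hk
  exact (infDist_primalOpt_le hsad _ _).trans
    (heb _ _ _ _ _ _ (halg.mu_nonneg _) (halg.saddleSubdiff_succ hf hA hg1 hg₂ k) hk)

theorem eckstein_silva_alm_primal_distance_tends_to_zero {f : X → ℝ} {h : X → Evec m1} {g : X → Evec m2}
    (hf : ConvexOn ℝ Set.univ f)
    (hh : ∃ A : X →ᵃ[ℝ] Evec m1, ∀ z, h z = A z)
    (hg1 : ∀ i, ConvexOn ℝ Set.univ (fun z => g z i))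
    (hg2 : ∀ i, ContDiff ℝ 1 (fun z => g z i))
    {σ : ℝ} {c : ℕ → ℝ} {x y w : ℕ → X} {lam : ℕ → Evec m1} {mu : ℕ → Evec m2}
    (halg : ALMSeq f h g σ c x y w lam mu)
    (hsad : (SaddlePoints f h g).Nonempty)
    {κ ε : ℝ} (hκ : 0 < κ) (hε : 0 < ε)
    (heb : ∀ (z : X) (lam' : Evec m1) (mu' : Evec m2) (y' : X) (u' : Evec m1) (v' : Evec m2),
      (∀ i, 0 ≤ mu' i) → saddleSubdiff f h g z lam' mu' y' u' v' →
      ‖asT (y', mkDual u' v')‖ ≤ ε →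
      Metric.infDist (asT (z, mkDual lam' mu')) (asT '' SaddlePoints f h g) ≤
        κ * ‖asT (y', mkDual u' v')‖)
 :
    Tendsto (fun k => Metric.infDist (x k) (PrimalOpt f h g)) atTop (nhds 0) :=
  eckstein_silva_alm_primal_distance_tends_to_zero_general hf hh hg1 hg2 halg hsad hε heb
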